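/- Let E ≤ G(Γ'') be the subgroup generated by {(s,0) : s ∈ V_inf}. Then G(Γ'') = β(G(Γ)) ⋊ E: every element of G(Γ'') is uniquely a product β(g)·e with g ∈ G(Γ) and e ∈ E, and β(G(Γ)) is normal in G(Γ''). Moreover conjugation by (t,0) sends β(s) to β(s) for s ≠ t and β(s) to β(s)⁻¹ for s = t (for s, t ∈ V_inf), and fixes β(s) for s ∈ V_fin. -/

import Mathlib

open Pointwise

/-- Relations of the graph product of cyclic groups: `s ^ n = 1` whenever the label of
`s` is the finite value `n`, and commutators of generators joined by an edge. -/
def graphProductRels {V : Type*} (Γ : SimpleGraph V) (c : V → ℕ∞) : Set (FreeGroup V) :=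
  {r | (∃ (s : V) (n : ℕ), c s = (n : ℕ∞) ∧ r = FreeGroup.of s ^ n) ∨
       (∃ s t : V, Γ.Adj s t ∧
         r = FreeGroup.of s * FreeGroup.of t * (FreeGroup.of s)⁻¹ * (FreeGroup.of t)⁻¹)}

/-- The graph product of cyclic groups associated to a graph `Γ` with labeling `c`. -/
abbrev GraphProduct {V : Type*} (Γ : SimpleGraph V) (c : V → ℕ∞) : Type _ :=
  PresentedGroup (graphProductRels Γ c)

/-- The generator of `GraphProduct Γ c` corresponding to a vertex `s`. -/
def gpGen {V : Type*} (Γ : SimpleGraph V) (c : V → ℕ∞) (s : V) : GraphProduct Γ c :=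
  PresentedGroup.of s

/-- The element of the graph product represented by a word `(s₁^{e₁}, …, s_k^{e_k})`. -/
def wordProd {V : Type*} (Γ : SimpleGraph V) (c : V → ℕ∞) (w : List (V × ℤ)) :
    GraphProduct Γ c :=
  (w.map (fun p => gpGen Γ c p.1 ^ p.2)).prod

/-- The elementary moves on words: deleting a letter that is trivial in the vertex group,
merging consecutive powers of the same generator, and swapping consecutive letters whose
generators are joined by an edge. -/
inductive GPMove {V : Type*} (Γ : SimpleGraph V) (c : V → ℕ∞) :
    List (V × ℤ) → List (V × ℤ) → Prop
  | del (w₁ w₂ : List (V × ℤ)) (s : V) (e : ℤ) (h : gpGen Γ c s ^ e = 1) :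
      GPMove Γ c (w₁ ++ (s, e) :: w₂) (w₁ ++ w₂)
  | merge (w₁ w₂ : List (V × ℤ)) (s : V) (a b : ℤ) :
      GPMove Γ c (w₁ ++ (s, a) :: (s, b) :: w₂) (w₁ ++ (s, a + b) :: w₂)
  | swap (w₁ w₂ : List (V × ℤ)) (s t : V) (a b : ℤ) (h : Γ.Adj s t) :
      GPMove Γ c (w₁ ++ (s, a) :: (t, b) :: w₂) (w₁ ++ (t, b) :: (s, a) :: w₂)

/-- A word is reduced if it cannot be shortened by any sequence of elementary moves. -/
def GPReduced {V : Type*} (Γ : SimpleGraph V) (c : V → ℕ∞) (w : List (V × ℤ)) : Prop :=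
  ∀ w', Relation.ReflTransGen (GPMove Γ c) w w' → w.length ≤ w'.length

/-- The length of a word: infinite-order letters count with the absolute value of their
exponent, finite-order letters count once. -/
def wordLen {V : Type*} (c : V → ℕ∞) (w : List (V × ℤ)) : ℕ :=
  (w.map (fun p => if c p.1 = ⊤ then p.2.natAbs else 1)).sum

/-- The length of a group element: the minimum of the lengths of words representing it. -/
noncomputable def elLen {V : Type*} (Γ : SimpleGraph V) (c : V → ℕ∞)
    (g : GraphProduct Γ c) : ℕ :=
  sInf {n | ∃ w, wordProd Γ c w = g ∧ wordLen c w = n}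

/-- `g` ends with the generator `s`. -/
def EndsWith {V : Type*} (Γ : SimpleGraph V) (c : V → ℕ∞) (g : GraphProduct Γ c)
    (s : V) : Prop :=
  ∃ (w : List (V × ℤ)) (e : ℤ), GPReduced Γ c (w ++ [(s, e)]) ∧
    wordProd Γ c (w ++ [(s, e)]) = g

/-- The vertices of `Γ` with finite label. -/
def Vfin {V : Type*} (c : V → ℕ∞) := {s : V // c s ≠ ⊤}

/-- The vertices of `Γ` with infinite label. -/
def Vinf {V : Type*} (c : V → ℕ∞) := {s : V // c s = ⊤}

/-- Vertex set of the Davis–Januszkiewicz graph `Γ''`: `V_fin ∪ (V_inf × {0,1})`,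
where `true` encodes `1` and `false` encodes `0`. -/
def DJVert {V : Type*} (c : V → ℕ∞) := Vfin c ⊕ (Vinf c × Bool)

/-- The graph `Γ''`: the subgraph on `V_fin ∪ (V_inf × {1})` is a copy of `Γ`, and
each `(v,0)` is joined to every other vertex except `(v,1)`. -/
def DJGraph {V : Type*} (Γ : SimpleGraph V) (c : V → ℕ∞) : SimpleGraph (DJVert c) :=
  SimpleGraph.fromRel (fun x y =>
    match x, y with
    | Sum.inl s, Sum.inl t => Γ.Adj s.1 t.1
    | Sum.inl s, Sum.inr (t, b) => if b then Γ.Adj s.1 t.1 else True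
    | Sum.inr (t, b), Sum.inl s => if b then Γ.Adj s.1 t.1 else True
    | Sum.inr (s, a), Sum.inr (t, b) =>
        if a = true ∧ b = true then Γ.Adj s.1 t.1 else s.1 ≠ t.1)

/-- Labels of `Γ''`: vertices of `V_fin` keep their label, the new vertices are
labeled `2`. -/
def DJLabel {V : Type*} (c : V → ℕ∞) : DJVert c → ℕ∞
  | Sum.inl s => c s.1
  | Sum.inr _ => 2

/-- The graph product `G(Γ'')`. -/
abbrev GPdj {V : Type*} (Γ : SimpleGraph V) (c : V → ℕ∞) : Type _ :=
  GraphProduct (DJGraph Γ c) (DJLabel c)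

/-- The generator of `G(Γ'')` corresponding to `s ∈ V_fin`. -/
def genFin {V : Type*} (Γ : SimpleGraph V) (c : V → ℕ∞) (s : Vfin c) : GPdj Γ c :=
  gpGen (DJGraph Γ c) (DJLabel c) (Sum.inl s)

/-- The generator of `G(Γ'')` corresponding to `(s,1)`, `s ∈ V_inf`. -/
def genA {V : Type*} (Γ : SimpleGraph V) (c : V → ℕ∞) (s : Vinf c) : GPdj Γ c :=
  gpGen (DJGraph Γ c) (DJLabel c) (Sum.inr (s, true))

/-- The generator of `G(Γ'')` corresponding to `(s,0)`, `s ∈ V_inf`. -/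
def genR {V : Type*} (Γ : SimpleGraph V) (c : V → ℕ∞) (s : Vinf c) : GPdj Γ c :=
  gpGen (DJGraph Γ c) (DJLabel c) (Sum.inr (s, false))

/-- `φ` is the homomorphism `β`, determined by `β(s) = s` for `s ∈ V_fin` and
`β(s) = (s,1)·(s,0)` for `s ∈ V_inf`. -/
def BetaSpec {V : Type*} (Γ : SimpleGraph V) (c : V → ℕ∞)
    (φ : GraphProduct Γ c →* GPdj Γ c) : Prop :=
  (∀ (s : V) (h : c s ≠ ⊤), φ (gpGen Γ c s) = genFin Γ c ⟨s, h⟩) ∧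
  (∀ (s : V) (h : c s = ⊤), φ (gpGen Γ c s) = genA Γ c ⟨s, h⟩ * genR Γ c ⟨s, h⟩)

/-- The subgroup `E` of `G(Γ'')` generated by the elements `(s,0)`, `s ∈ V_inf`. -/
def Esub {V : Type*} (Γ : SimpleGraph V) (c : V → ℕ∞) : Subgroup (GPdj Γ c) :=
  Subgroup.closure (Set.range (genR Γ c))

open scoped Classical

/-!
Uniqueness of the decomposition is read off in the model `G(Γ) ⋊ {±1}^V`, where a sign vector
`ε` acts on `G(Γ)` by `s ↦ s ^ ε s`. The assignment `s ↦ s`, `(t,1) ↦ t · δ_t`, `(t,0) ↦ δ_t`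
(with `δ_t` the sign vector that is `-1` exactly at `t`) respects the relations of `G(Γ'')`;
the resulting homomorphism composes with `β` to the inclusion of `G(Γ)` and maps `E` into the
complement `{±1}^V`, so `β(g) · e` determines `g` and then `e`.

Conjugation by the involution `(t,0)` inverts `β(t)` and fixes every other `β(s)`, so `(t,0)`
normalizes `β(G(Γ))`. As `(t,1) = β(t) · (t,0)`, the subgroups `β(G(Γ))` and `E` generate
`G(Γ'')`; hence `β(G(Γ))` is normal and every element is a product `β(g) · e`.
-/

theorem SemidirectProduct.inr_mul_inl {N G : Type*} [Group N] [Group G] {φ : G →* MulAut N}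
    (g : G) (n : N) : (inr g * inl n : N ⋊[φ] G) = inl (φ g n) * inr g := by
  simp [inl_aut, mul_assoc]

theorem Subgroup.mem_normalizer_closure_of_mul_self {G : Type*} [Group G] {S : Set G} {g : G}
    (hg : g * g = 1) (hS : ∀ s ∈ S, g * s * g⁻¹ ∈ closure S) : g ∈ normalizer (closure S) := by
  have hconj : ∀ x ∈ closure S, g * x * g⁻¹ ∈ closure S := fun x hx =>
    (closure_le ((closure S).comap (MulAut.conj g).toMonoidHom)).2 hS hx
  have hg' : g⁻¹ = g := inv_eq_of_mul_eq_one_right hg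
  refine mem_normalizer_iff.2 fun x => ⟨hconj x, fun hx => ?_⟩
  simpa [hg', mul_assoc, ← mul_assoc g g, hg] using hconj _ hx

namespace GraphProduct

variable {V : Type*} {Γ : SimpleGraph V} {c : V → ℕ∞}

theorem gpGen_pow_eq_one {s : V} {n : ℕ} (h : c s = n) : gpGen Γ c s ^ n = 1 := by
  simpa [gpGen, PresentedGroup.of] using
    PresentedGroup.one_of_mem (rels := graphProductRels Γ c) (Or.inl ⟨s, n, h, rfl⟩)

theorem gpGen_commute {s t : V} (h : Γ.Adj s t) : Commute (gpGen Γ c s) (gpGen Γ c t) := by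
  have := PresentedGroup.one_of_mem (rels := graphProductRels Γ c) (Or.inr ⟨s, t, h, rfl⟩)
  simpa [← commutatorElement_eq_one_iff_commute, commutatorElement_def, gpGen,
    PresentedGroup.of] using this

theorem gpGen_mul_self {s : V} (h : c s = 2) : gpGen Γ c s * gpGen Γ c s = 1 := by
  rw [← sq]
  exact gpGen_pow_eq_one h

variable {G : Type*} [Group G]

def lift (f : V → G) (hpow : ∀ s (n : ℕ), c s = n → f s ^ n = 1)
    (hcomm : ∀ s t, Γ.Adj s t → Commute (f s) (f t)) : GraphProduct Γ c →* G :=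
  PresentedGroup.toGroup (f := f) <| by
    rintro r (⟨s, n, hs, rfl⟩ | ⟨s, t, hst, rfl⟩)
    · simpa using hpow s n hs
    · simp [(hcomm s t hst).eq]

@[simp]
theorem lift_gpGen (f : V → G) (hpow hcomm) (s : V) :
    lift (Γ := Γ) (c := c) f hpow hcomm (gpGen Γ c s) = f s :=
  PresentedGroup.toGroup.of _

theorem hom_ext {f g : GraphProduct Γ c →* G} (h : ∀ s, f (gpGen Γ c s) = g (gpGen Γ c s)) :
    f = g :=
  PresentedGroup.ext h

theorem closure_range_gpGen : Subgroup.closure (Set.range (gpGen Γ c)) = ⊤ :=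
  PresentedGroup.closure_range_of _

theorem range_eq_closure (f : GraphProduct Γ c →* G) :
    f.range = Subgroup.closure (Set.range fun s => f (gpGen Γ c s)) := by
  rw [MonoidHom.range_eq_map, ← closure_range_gpGen, MonoidHom.map_closure, ← Set.range_comp]
  rfl

def signEnd (ε : V → ℤˣ) : GraphProduct Γ c →* GraphProduct Γ c :=
  lift (fun s => gpGen Γ c s ^ (ε s : ℤ))
    (fun s n h => by rw [← zpow_natCast, ← zpow_mul, mul_comm, zpow_mul, zpow_natCast,
      gpGen_pow_eq_one h, one_zpow])
    (fun _ _ h => (gpGen_commute h).zpow_zpow _ _)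

@[simp]
theorem signEnd_gpGen (ε : V → ℤˣ) (s : V) :
    signEnd ε (gpGen Γ c s) = gpGen Γ c s ^ (ε s : ℤ) :=
  lift_gpGen _ _ _ s

theorem signEnd_comp (ε ε' : V → ℤˣ) :
    (signEnd ε).comp (signEnd ε') = (signEnd (ε * ε') : GraphProduct Γ c →* _) := by
  refine hom_ext fun s => ?_
  simp [← zpow_mul]

theorem signEnd_one : (signEnd 1 : GraphProduct Γ c →* _) = MonoidHom.id _ := by
  refine hom_ext fun s => ?_
  simp

def signAction : (V → ℤˣ) →* MulAut (GraphProduct Γ c) where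
  toFun ε := MonoidHom.toMulEquiv (signEnd ε) (signEnd ε⁻¹)
    (by rw [signEnd_comp, inv_mul_cancel, signEnd_one])
    (by rw [signEnd_comp, mul_inv_cancel, signEnd_one])
  map_one' := MulEquiv.ext fun x => DFunLike.congr_fun signEnd_one x
  map_mul' ε ε' := MulEquiv.ext fun x => (DFunLike.congr_fun (signEnd_comp ε ε') x).symm

@[simp]
theorem signAction_apply (ε : V → ℤˣ) (x : GraphProduct Γ c) :
    signAction ε x = signEnd ε x :=
  rfl

end GraphProduct

section DJ

open GraphProduct

variable {V : Type*} {Γ : SimpleGraph V} {c : V → ℕ∞}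

theorem exists_vinf_or_exists_vfin (v : V) : (∃ t : Vinf c, t.1 = v) ∨ ∃ s : Vfin c, s.1 = v :=
  (em (c v = ⊤)).imp (fun h => ⟨⟨v, h⟩, rfl⟩) fun h => ⟨⟨v, h⟩, rfl⟩

theorem BetaSpec.apply_vfin {φ : GraphProduct Γ c →* GPdj Γ c} (hφ : BetaSpec Γ c φ)
    (s : Vfin c) : φ (gpGen Γ c s.1) = genFin Γ c s :=
  hφ.1 s.1 s.2

theorem BetaSpec.apply_vinf {φ : GraphProduct Γ c →* GPdj Γ c} (hφ : BetaSpec Γ c φ)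
    (t : Vinf c) : φ (gpGen Γ c t.1) = genA Γ c t * genR Γ c t :=
  hφ.2 t.1 t.2

theorem DJGraph_adj_inl_inr_false (s : Vfin c) (t : Vinf c) :
    (DJGraph Γ c).Adj (.inl s) (.inr (t, false)) :=
  (SimpleGraph.fromRel_adj _ _ _).2 ⟨Sum.inl_ne_inr, Or.inl trivial⟩

theorem DJGraph_adj_inr_inr_false {s t : Vinf c} (a : Bool) (h : s.1 ≠ t.1) :
    (DJGraph Γ c).Adj (.inr (s, a)) (.inr (t, false)) :=
  (SimpleGraph.fromRel_adj _ _ _).2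
    ⟨fun h' => h (congrArg (·.1.1) (Sum.inr_injective h')), Or.inl (by simpa using h)⟩

theorem genR_mul_self (t : Vinf c) : genR Γ c t * genR Γ c t = 1 :=
  gpGen_mul_self rfl

theorem genR_inv (t : Vinf c) : (genR Γ c t)⁻¹ = genR Γ c t :=
  inv_eq_of_mul_eq_one_right (genR_mul_self t)

theorem genA_inv (t : Vinf c) : (genA Γ c t)⁻¹ = genA Γ c t :=
  inv_eq_of_mul_eq_one_right (gpGen_mul_self rfl)

theorem commute_genFin_genR (s : Vfin c) (t : Vinf c) : Commute (genFin Γ c s) (genR Γ c t) :=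
  gpGen_commute (DJGraph_adj_inl_inr_false s t)

theorem commute_genA_genR {s t : Vinf c} (h : s.1 ≠ t.1) : Commute (genA Γ c s) (genR Γ c t) :=
  gpGen_commute (DJGraph_adj_inr_inr_false true h)

theorem commute_genR_genR {s t : Vinf c} (h : s.1 ≠ t.1) : Commute (genR Γ c s) (genR Γ c t) :=
  gpGen_commute (DJGraph_adj_inr_inr_false false h)

end DJ

section Model

open GraphProduct SemidirectProduct

variable {V : Type*} {Γ : SimpleGraph V} {c : V → ℕ∞}

noncomputable def signFlip (t : V) : V → ℤˣ :=
  Pi.mulSingle t (-1)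

theorem signFlip_mul_self (t : V) : signFlip t * signFlip t = 1 := by
  rw [signFlip, ← Pi.mulSingle_mul, Int.units_mul_self, Pi.mulSingle_one]

@[simp]
theorem signEnd_signFlip_gpGen_self (t : V) :
    signEnd (signFlip t) (gpGen Γ c t) = (gpGen Γ c t)⁻¹ := by
  simp [signFlip]

theorem signEnd_signFlip_gpGen_of_ne {v t : V} (h : v ≠ t) :
    signEnd (signFlip t) (gpGen Γ c v) = gpGen Γ c v := by
  simp [signFlip, h]

variable (Γ c) in
abbrev DJModel : Type _ :=
  GraphProduct Γ c ⋊[signAction] (V → ℤˣ)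

theorem commute_inl_gpGen_inr_signFlip {v t : V} (h : v ≠ t) :
    Commute (inl (gpGen Γ c v) : DJModel Γ c) (inr (signFlip t)) := by
  rw [Commute, SemiconjBy, inr_mul_inl, signAction_apply, signEnd_signFlip_gpGen_of_ne h]

theorem commute_inr_inr (ε ε' : V → ℤˣ) : Commute (inr ε : DJModel Γ c) (inr ε') :=
  (Commute.all ε ε').map inr

theorem inl_gpGen_mul_inr_signFlip_sq (t : V) :
    (inl (gpGen Γ c t) * inr (signFlip t) : DJModel Γ c) ^ 2 = 1 := by
  rw [sq, mul_assoc, ← mul_assoc (inr _), inr_mul_inl, signAction_apply,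
    signEnd_signFlip_gpGen_self, map_inv, mul_assoc, mul_inv_cancel_left, ← map_mul,
    signFlip_mul_self, map_one]

noncomputable def DJModel.gen : DJVert c → DJModel Γ c
  | .inl s => inl (gpGen Γ c s.1)
  | .inr (s, true) => inl (gpGen Γ c s.1) * inr (signFlip s.1)
  | .inr (s, false) => inr (signFlip s.1)

theorem DJModel.gen_pow_eq_one (x : DJVert c) (n : ℕ) (hx : DJLabel c x = n) :
    DJModel.gen (Γ := Γ) x ^ n = 1 := by
  rcases x with s | ⟨s, _ | _⟩
  · rw [DJModel.gen, ← map_pow, gpGen_pow_eq_one (Γ := Γ) (s := s.1) hx, map_one]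
  all_goals obtain rfl : n = 2 := by change (2 : ℕ∞) = n at hx; exact_mod_cast hx.symm
  · rw [DJModel.gen, ← map_pow, sq, signFlip_mul_self, map_one]
  · exact inl_gpGen_mul_inr_signFlip_sq _

theorem DJModel.gen_commute (x y : DJVert c) (hxy : (DJGraph Γ c).Adj x y) :
    Commute (DJModel.gen (Γ := Γ) x) (DJModel.gen y) := by
  have hinl {u v : V} (h : Γ.Adj u v) :
      Commute (inl (gpGen Γ c u) : DJModel Γ c) (inl (gpGen Γ c v)) :=
    (gpGen_commute h).map inl
  have hflip {u v : V} (h : u ≠ v) := commute_inl_gpGen_inr_signFlip (Γ := Γ) (c := c) h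
  have fin_ne (s : Vfin c) (t : Vinf c) : s.1 ≠ t.1 := fun h => s.2 (h ▸ t.2)
  obtain ⟨-, hxy⟩ := (SimpleGraph.fromRel_adj _ _ _).1 hxy
  rcases x with s | ⟨s, _ | _⟩ <;> rcases y with t | ⟨t, _ | _⟩ <;>
    simp only [ne_eq, if_true, if_false, Bool.false_eq_true, and_true, and_false,
      or_self] at hxy <;>
    simp only [DJModel.gen]
  · exact hinl (hxy.elim id .symm)
  · exact hflip (fin_ne s t)
  · exact (hinl hxy).mul_right (hflip (fin_ne s t))
  · exact (hflip (fin_ne t s)).symm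
  · exact commute_inr_inr _ _
  · exact (hflip (hxy.elim Ne.symm id)).symm.mul_right (commute_inr_inr _ _)
  · exact (hinl hxy.symm).mul_left (hflip (fin_ne t s)).symm
  · exact (hflip (hxy.elim id Ne.symm)).mul_left (commute_inr_inr _ _)
  · obtain hst : Γ.Adj s.1 t.1 := hxy.elim id .symm
    exact ((hinl hst).mul_right (hflip hst.ne)).mul_left
      ((hflip hst.ne').symm.mul_right (commute_inr_inr _ _))

noncomputable def toDJModel : GPdj Γ c →* DJModel Γ c :=
  lift DJModel.gen DJModel.gen_pow_eq_one DJModel.gen_commute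

@[simp]
theorem toDJModel_genFin (s : Vfin c) : toDJModel (genFin Γ c s) = inl (gpGen Γ c s.1) :=
  lift_gpGen _ _ _ _

@[simp]
theorem toDJModel_genA (t : Vinf c) :
    toDJModel (genA Γ c t) = inl (gpGen Γ c t.1) * inr (signFlip t.1) :=
  lift_gpGen _ _ _ _

@[simp]
theorem toDJModel_genR (t : Vinf c) : toDJModel (genR Γ c t) = inr (signFlip t.1) :=
  lift_gpGen _ _ _ _

theorem toDJModel_comp_beta {φ : GraphProduct Γ c →* GPdj Γ c} (hφ : BetaSpec Γ c φ) :
    toDJModel.comp φ = inl := by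
  refine hom_ext fun v => ?_
  obtain ⟨t, rfl⟩ | ⟨s, rfl⟩ := exists_vinf_or_exists_vfin (c := c) v
  · rw [MonoidHom.comp_apply, hφ.apply_vinf, map_mul, toDJModel_genA, toDJModel_genR, mul_assoc,
      ← map_mul, signFlip_mul_self, map_one, mul_one]
  · rw [MonoidHom.comp_apply, hφ.apply_vfin, toDJModel_genFin]

theorem map_Esub_le_range_inr : (Esub Γ c).map toDJModel ≤ (inr : _ →* DJModel Γ c).range := by
  rw [Subgroup.map_le_iff_le_comap, Esub, Subgroup.closure_le]
  rintro _ ⟨t, rfl⟩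
  exact ⟨signFlip t.1, (toDJModel_genR t).symm⟩

theorem eq_of_beta_mul_eq {φ : GraphProduct Γ c →* GPdj Γ c} (hφ : BetaSpec Γ c φ)
    {g g' : GraphProduct Γ c} {e e' : GPdj Γ c} (he : e ∈ Esub Γ c) (he' : e' ∈ Esub Γ c)
    (h : φ g * e = φ g' * e') : g = g' ∧ e = e' := by
  obtain ⟨ε, hε⟩ := map_Esub_le_range_inr ⟨e, he, rfl⟩
  obtain ⟨ε', hε'⟩ := map_Esub_le_range_inr ⟨e', he', rfl⟩
  have hmodel := congrArg (fun x => (toDJModel x).left) h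
  simp only [map_mul, ← MonoidHom.comp_apply toDJModel φ, toDJModel_comp_beta hφ] at hmodel
  obtain rfl : g = g' := by simpa [← hε, ← hε'] using hmodel
  exact ⟨rfl, mul_left_cancel h⟩

end Model

section Decomposition

open GraphProduct

variable {V : Type*} {Γ : SimpleGraph V} {c : V → ℕ∞} {φ : GraphProduct Γ c →* GPdj Γ c}

theorem genR_conj_beta_self (hφ : BetaSpec Γ c φ) (t : Vinf c) :
    genR Γ c t * φ (gpGen Γ c t.1) * (genR Γ c t)⁻¹ = (φ (gpGen Γ c t.1))⁻¹ := by
  rw [hφ.apply_vinf, mul_inv_rev, genR_inv, genA_inv, mul_assoc, mul_assoc, genR_mul_self,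
    mul_one]

theorem genR_conj_beta_of_ne (hφ : BetaSpec Γ c φ) {s t : Vinf c} (h : s ≠ t) :
    genR Γ c t * φ (gpGen Γ c s.1) * (genR Γ c t)⁻¹ = φ (gpGen Γ c s.1) := by
  have hst : s.1 ≠ t.1 := Subtype.val_injective.ne h
  rw [hφ.apply_vinf, ← ((commute_genA_genR hst).mul_left (commute_genR_genR hst)).eq,
    mul_inv_cancel_right]

theorem genR_conj_beta_vfin (hφ : BetaSpec Γ c φ) (s : Vfin c) (t : Vinf c) :
    genR Γ c t * φ (gpGen Γ c s.1) * (genR Γ c t)⁻¹ = φ (gpGen Γ c s.1) := by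
  rw [hφ.apply_vfin, (commute_genFin_genR s t).symm.eq, mul_inv_cancel_right]

theorem genR_conj_beta_mem_range (hφ : BetaSpec Γ c φ) (t : Vinf c) (v : V) :
    genR Γ c t * φ (gpGen Γ c v) * (genR Γ c t)⁻¹ ∈ φ.range := by
  obtain ⟨s, rfl⟩ | ⟨s, rfl⟩ := exists_vinf_or_exists_vfin (c := c) v
  · obtain rfl | h := eq_or_ne s t
    · rw [genR_conj_beta_self hφ]
      exact inv_mem ⟨_, rfl⟩
    · rw [genR_conj_beta_of_ne hφ h]
      exact ⟨_, rfl⟩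
  · rw [genR_conj_beta_vfin hφ]
    exact ⟨_, rfl⟩

theorem genR_mem_normalizer_range (hφ : BetaSpec Γ c φ) (t : Vinf c) :
    genR Γ c t ∈ Subgroup.normalizer (φ.range : Set (GPdj Γ c)) := by
  rw [range_eq_closure]
  refine Subgroup.mem_normalizer_closure_of_mul_self (genR_mul_self t) ?_
  rintro _ ⟨v, rfl⟩
  rw [← range_eq_closure]
  exact genR_conj_beta_mem_range hφ t v

theorem genA_eq_beta_mul_genR (hφ : BetaSpec Γ c φ) (t : Vinf c) :
    genA Γ c t = φ (gpGen Γ c t.1) * genR Γ c t := by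
  rw [hφ.apply_vinf, mul_assoc, genR_mul_self, mul_one]

theorem range_sup_Esub_eq_top (hφ : BetaSpec Γ c φ) : φ.range ⊔ Esub Γ c = ⊤ := by
  have hR (t : Vinf c) : genR Γ c t ∈ φ.range ⊔ Esub Γ c :=
    Subgroup.mem_sup_right (Subgroup.subset_closure ⟨t, rfl⟩)
  rw [eq_top_iff, ← closure_range_gpGen, Subgroup.closure_le]
  rintro _ ⟨s | ⟨t, _ | _⟩, rfl⟩
  · exact Subgroup.mem_sup_left ⟨gpGen Γ c s.1, hφ.apply_vfin s⟩
  · exact hR t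
  · rw [← genA, genA_eq_beta_mul_genR hφ]
    exact mul_mem (Subgroup.mem_sup_left ⟨_, rfl⟩) (hR t)

theorem range_normal (hφ : BetaSpec Γ c φ) : φ.range.Normal := by
  rw [← Subgroup.normalizer_eq_top_iff, eq_top_iff, ← range_sup_Esub_eq_top hφ]
  refine sup_le Subgroup.le_normalizer ((Subgroup.closure_le _).2 ?_)
  rintro _ ⟨t, rfl⟩
  exact genR_mem_normalizer_range hφ t

theorem existsUnique_beta_mul_eq (hφ : BetaSpec Γ c φ) (x : GPdj Γ c) :
    ∃! p : GraphProduct Γ c × Esub Γ c, φ p.1 * (p.2 : GPdj Γ c) = x := by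
  have := range_normal hφ
  obtain ⟨_, ⟨g, rfl⟩, e, he, hx⟩ : x ∈ (φ.range : Set (GPdj Γ c)) * Esub Γ c := by
    rw [← Subgroup.normal_mul, range_sup_Esub_eq_top hφ]
    trivial
  refine ⟨(g, ⟨e, he⟩), hx, fun ⟨g', e'⟩ h => ?_⟩
  obtain ⟨rfl, rfl⟩ := eq_of_beta_mul_eq hφ e'.2 he (h.trans hx.symm)
  rfl

end Decomposition

theorem semidirect_decomposition_general {V : Type*}
    (Γ : SimpleGraph V) (c : V → ℕ∞) (φ : GraphProduct Γ c →* GPdj Γ c)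
    (hφ : BetaSpec Γ c φ) :
    φ.range.Normal ∧
    (∀ x : GPdj Γ c, ∃! p : GraphProduct Γ c × Esub Γ c, φ p.1 * (p.2 : GPdj Γ c) = x) ∧
    (∀ s t : Vinf c,
      genR Γ c t * φ (gpGen Γ c s.1) * (genR Γ c t)⁻¹ =
        if s = t then (φ (gpGen Γ c s.1))⁻¹ else φ (gpGen Γ c s.1)) ∧
    (∀ (s : Vfin c) (t : Vinf c),
      genR Γ c t * φ (gpGen Γ c s.1) * (genR Γ c t)⁻¹ = φ (gpGen Γ c s.1)) := by
  refine ⟨range_normal hφ, existsUnique_beta_mul_eq hφ, fun s t => ?_, genR_conj_beta_vfin hφ⟩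
  split_ifs with h
  · subst h
    exact genR_conj_beta_self hφ s
  · exact genR_conj_beta_of_ne hφ h

/-- `G(Γ'') = β(G(Γ)) ⋊ E`: the image of `β` is normal, every element
of `G(Γ'')` is uniquely `β(g)·e` with `e ∈ E`, and conjugation by `(t,0)` inverts
`β(t)` and fixes `β(s)` for all other generators `s`. -/
theorem semidirect_decomposition {V : Type*} [Fintype V] [DecidableEq V]
    (Γ : SimpleGraph V) (c : V → ℕ∞) (φ : GraphProduct Γ c →* GPdj Γ c)
    (hφ : BetaSpec Γ c φ) :
    φ.range.Normal ∧
    (∀ x : GPdj Γ c, ∃! p : GraphProduct Γ c × Esub Γ c, φ p.1 * (p.2 : GPdj Γ c) = x) ∧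
    (∀ s t : Vinf c,
      genR Γ c t * φ (gpGen Γ c s.1) * (genR Γ c t)⁻¹ =
        if s = t then (φ (gpGen Γ c s.1))⁻¹ else φ (gpGen Γ c s.1)) ∧
    (∀ (s : Vfin c) (t : Vinf c),
      genR Γ c t * φ (gpGen Γ c s.1) * (genR Γ c t)⁻¹ = φ (gpGen Γ c s.1)) :=
  semidirect_decomposition_general Γ c φ hφ
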